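/- Let V be a finite-dimensional complex inner product space and Λ a self-adjoint endomorphism of V. For every v ∈ V \ {0}, the function t ↦ log‖e^{tΛ} v‖ is convex on ℝ. -/

import Mathlib

/-!
In an orthonormal eigenbasis of `Λ`, with eigenvalues `λᵢ` and coordinates `vᵢ`,
`‖e^{tΛ} v‖² = ∑ᵢ |vᵢ|² e^{2λᵢ t}`. A nonnegative combination of exponentials is log-convex:
each term satisfies `a e^{c(αx + βy)} = (a e^{cx})^α (a e^{cy})^β`, so by Hölder's inequality with
exponents `1/α`, `1/β` the sum at `αx + βy` is at most the weighted geometric mean of the sums at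
`x` and `y`.
-/

open Filter Topology NormedSpace
open scoped LinearAlgebra.Projectivization

set_option linter.unusedSectionVars false

noncomputable section

namespace CSW

variable {E : Type*} [NormedAddCommGroup E] [InnerProductSpace ℂ E] [FiniteDimensional ℂ E]
variable {V : Type*} [NormedAddCommGroup V] [InnerProductSpace ℂ V] [FiniteDimensional ℂ V]

/-- The exponential `e^T` of a bounded operator, as a unit (invertible element) of the algebra
of continuous linear endomorphisms. -/
def expUnit (T : E →L[ℂ] E) : (E →L[ℂ] E)ˣ where
  val := exp T
  inv := exp (-T)
  val_inv := by
    letI : NormedAlgebra ℚ (E →L[ℂ] E) := .restrictScalars ℚ ℂ _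
    rw [← exp_add_of_commute (Commute.refl T).neg_right, add_neg_cancel, exp_zero]
  inv_val := by
    letI : NormedAlgebra ℚ (E →L[ℂ] E) := .restrictScalars ℚ ℂ _
    rw [← exp_add_of_commute (Commute.refl T).neg_left, neg_add_cancel, exp_zero]

/-- `Bseq A i` is `B_i = A_i A_{i-1}⁻¹` (with the junk value `B_0 = 1`). -/
def Bseq (A : ℕ → (E →L[ℂ] E)ˣ) (i : ℕ) : (E →L[ℂ] E)ˣ := A i * (A (i - 1))⁻¹

/-- Condition (*): for any subsequence, after passing to a further subsequence, `B_{α+1}` and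
`B_{α+2}` both converge (in operator norm) to `g e^Λ g⁻¹` for some unitary `g`. -/
def CondStar (A : ℕ → (E →L[ℂ] E)ˣ) (Λ : E →L[ℂ] E) : Prop :=
  ∀ φ : ℕ → ℕ, StrictMono φ → ∃ ψ : ℕ → ℕ, StrictMono ψ ∧ ∃ g : (E →L[ℂ] E)ˣ,
    (g : E →L[ℂ] E) ∈ unitary (E →L[ℂ] E) ∧
    Tendsto (fun j => (Bseq A (φ (ψ j) + 1) : E →L[ℂ] E)) atTop
      (𝓝 ((g * expUnit Λ * g⁻¹ : (E →L[ℂ] E)ˣ) : E →L[ℂ] E)) ∧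
    Tendsto (fun j => (Bseq A (φ (ψ j) + 2) : E →L[ℂ] E)) atTop
      (𝓝 ((g * expUnit Λ * g⁻¹ : (E →L[ℂ] E)ˣ) : E →L[ℂ] E))

/-- Condition (*)' for a given gauge sequence `g`: `g 0 = 1`, each `g i` is unitary,
`B_i g_i e^{-Λ} g_i⁻¹ → Id` and `g_{i-1}⁻¹ g_i → Id`. -/
def CondStar' (A : ℕ → (E →L[ℂ] E)ˣ) (Λ : E →L[ℂ] E) (g : ℕ → (E →L[ℂ] E)ˣ) : Prop :=
  g 0 = 1 ∧ (∀ i, (g i : E →L[ℂ] E) ∈ unitary (E →L[ℂ] E)) ∧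
  Tendsto (fun i => ((Bseq A i * g i * expUnit (-Λ) * (g i)⁻¹ : (E →L[ℂ] E)ˣ) : E →L[ℂ] E))
    atTop (𝓝 1) ∧
  Tendsto (fun i => (((g (i - 1))⁻¹ * g i : (E →L[ℂ] E)ˣ) : E →L[ℂ] E)) atTop (𝓝 1)

/-- Membership in `G_Λ = {g ∈ G : g Λ g⁻¹ = Λ}`. -/
def InGΛ (Λ : E →L[ℂ] E) (h : (E →L[ℂ] E)ˣ) : Prop :=
  (h : E →L[ℂ] E) * Λ = Λ * (h : E →L[ℂ] E)

/-- Membership in `K_Λ = {g ∈ K : g Λ g⁻¹ = Λ}`. -/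
def InKΛ (Λ : E →L[ℂ] E) (h : (E →L[ℂ] E)ˣ) : Prop :=
  (h : E →L[ℂ] E) ∈ unitary (E →L[ℂ] E) ∧ InGΛ Λ h

/-- A (continuous, finite-dimensional) complex representation `ρ` of `G = GL(E)` on a Hermitian
vector space `V`, mapping unitary elements to unitary elements, together with a self-adjoint
operator `Λ_V` on `V` compatible with `Λ` via `ρ(e^{tΛ}) = e^{tΛ_V}`. -/
structure Rep (Λ : E →L[ℂ] E) (V : Type*) [NormedAddCommGroup V] [InnerProductSpace ℂ V]
    [FiniteDimensional ℂ V] where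
  ρ : (E →L[ℂ] E)ˣ →* (V →L[ℂ] V)ˣ
  continuous_ρ : Continuous fun u : (E →L[ℂ] E)ˣ => ((ρ u : (V →L[ℂ] V)ˣ) : V →L[ℂ] V)
  unitary_ρ : ∀ u : (E →L[ℂ] E)ˣ, (u : E →L[ℂ] E) ∈ unitary (E →L[ℂ] E) →
    ((ρ u : (V →L[ℂ] V)ˣ) : V →L[ℂ] V) ∈ unitary (V →L[ℂ] V)
  ΛV : V →L[ℂ] V
  selfAdjoint_ΛV : IsSelfAdjoint ΛV
  exp_eq : ∀ t : ℝ, ((ρ (expUnit ((t : ℂ) • Λ)) : (V →L[ℂ] V)ˣ) : V →L[ℂ] V)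
      = exp ((t : ℂ) • ΛV)

variable {Λ : E →L[ℂ] E}

theorem unit_apply_ne_zero (u : (V →L[ℂ] V)ˣ) {v : V} (hv : v ≠ 0) :
    (u : V →L[ℂ] V) v ≠ 0 := by
  intro h
  apply hv
  have h2 : (((u⁻¹ : (V →L[ℂ] V)ˣ) : V →L[ℂ] V) * (u : V →L[ℂ] V)) v = 0 := by
    rw [ContinuousLinearMap.mul_apply, h, map_zero]
  rwa [Units.inv_mul, ContinuousLinearMap.one_apply] at h2

theorem unit_apply_injective (u : (V →L[ℂ] V)ˣ) :
    Function.Injective ((u : V →L[ℂ] V) : V → V) := by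
  intro a b hab
  have h2 := congrArg (fun x => ((u⁻¹ : (V →L[ℂ] V)ˣ) : V →L[ℂ] V) x) hab
  simpa [← ContinuousLinearMap.mul_apply, Units.inv_mul] using h2

/-- `f_i(v) = log ‖ρ(A_i) v‖`. -/
def fseq (R : Rep Λ V) (A : ℕ → (E →L[ℂ] E)ˣ) (v : V) (i : ℕ) : ℝ :=
  Real.log ‖(R.ρ (A i) : V →L[ℂ] V) v‖

/-- The quotient topology on the projectivization of a topological vector space. -/
instance : TopologicalSpace (ℙ ℂ V) := instTopologicalSpaceQuotient

/-- The natural action of `GL(E)` on `ℙ(V)` through the representation `R`. -/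
def pact (R : Rep Λ V) (u : (E →L[ℂ] E)ˣ) : ℙ ℂ V → ℙ ℂ V :=
  Projectivization.map (((R.ρ u : (V →L[ℂ] V)ˣ) : V →L[ℂ] V) : V →ₗ[ℂ] V)
    (unit_apply_injective _)

/-- The limit set `Lim(v) ⊆ ℙ(V)`: the union of the `ρ(K_Λ)`-orbits of all subsequential limits
of `[ρ(g_i⁻¹ A_i) v]`. -/
def LimSet (R : Rep Λ V) (A g : ℕ → (E →L[ℂ] E)ˣ) {v : V} (hv : v ≠ 0) :
    Set (ℙ ℂ V) :=
  {y | ∃ (w : V) (hw : w ≠ 0) (k : (E →L[ℂ] E)ˣ), InKΛ Λ k ∧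
    y = Projectivization.mk ℂ ((R.ρ k : V →L[ℂ] V) w) (unit_apply_ne_zero _ hw) ∧
    ∃ φ : ℕ → ℕ, StrictMono φ ∧
      Tendsto (fun j => Projectivization.mk ℂ
          ((R.ρ ((g (φ j))⁻¹ * A (φ j)) : V →L[ℂ] V) v) (unit_apply_ne_zero _ hv))
        atTop (𝓝 (Projectivization.mk ℂ w hw))}

/-- The eigenspace `U` of `Λ` with (real) eigenvalue `c`. -/
def eigU (Λ : E →L[ℂ] E) (c : ℝ) : Submodule ℂ E :=
  Module.End.eigenspace (Λ : E →ₗ[ℂ] E) (c : ℂ)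

/-- The weight `d(v) = lim_i i⁻¹ log ‖A_i v‖` for the standard representation of `GL(E)` on `E`
(a junk value if the limit does not exist). -/
def dstd (A : ℕ → (E →L[ℂ] E)ˣ) (v : E) : ℝ :=
  limUnder atTop fun i : ℕ => Real.log ‖(A i : E →L[ℂ] E) v‖ / i

/-- `p_s = Σ_{k ≤ s} n_k` where `n_k = dim U_k`. -/
def psum (Λ : E →L[ℂ] E) {r : ℕ} (lam : Fin r → ℝ) (s : Fin r) : ℕ :=
  ∑ k ∈ Finset.univ.filter (fun k => k ≤ s), Module.finrank ℂ (eigU Λ (lam k))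

/-- `q_s = Σ_{k ≥ s} n_k` where `n_k = dim U_k`. -/
def qsum (Λ : E →L[ℂ] E) {r : ℕ} (lam : Fin r → ℝ) (s : Fin r) : ℕ :=
  ∑ k ∈ Finset.univ.filter (fun k => s ≤ k), Module.finrank ℂ (eigU Λ (lam k))

/-- A model for the `p`-th exterior power of `E`, with its induced Hermitian metric
(determined by `⟨x₁∧⋯∧x_p, y₁∧⋯∧y_p⟩ = det(⟨x_i, y_j⟩)`), the induced representation of `GL(E)`,
and the induced self-adjoint operator (the derivation extension of `Λ`, pinned down by
`Rep.exp_eq` and equivariance of `wedge`). -/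
structure ExtPower (Λ : E →L[ℂ] E) (p : ℕ) where
  P : Type
  [normed : NormedAddCommGroup P]
  [ips : InnerProductSpace ℂ P]
  [fd : FiniteDimensional ℂ P]
  R : Rep Λ P
  wedge : E [⋀^Fin p]→ₗ[ℂ] P
  wedge_map : ∀ (u : (E →L[ℂ] E)ˣ) (x : Fin p → E),
    ((R.ρ u : (P →L[ℂ] P)ˣ) : P →L[ℂ] P) (wedge x) = wedge fun j => (u : E →L[ℂ] E) (x j)
  wedge_inner : ∀ x y : Fin p → E,
    (inner ℂ (wedge x) (wedge y) : ℂ) = (Matrix.of fun i j : Fin p => (inner ℂ (x i) (y j) : ℂ)).det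
  wedge_span : Submodule.span ℂ (Set.range wedge) = ⊤

attribute [instance] ExtPower.normed ExtPower.ips ExtPower.fd

/-- A bundle of the choices made in Section 2 of the paper: a gauge sequence `g` as in (*)',
the filtration `V_s` (with `V_{r+1} = 0`), complements `W_s` with `V_s = W_s ⊕ V_{s+1}` and
`Lim(W_s) = {[⋀^{n_s} U_s]}`, and identifications `C_i → Id` carrying `g_i⁻¹ A_i · W_s`
onto `U_s`. -/
structure Choices (A : ℕ → (E →L[ℂ] E)ˣ) (Λ : E →L[ℂ] E) (r : ℕ) (lam : Fin r → ℝ)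
    (EP : ∀ p : ℕ, ExtPower Λ p) where
  g : ℕ → (E →L[ℂ] E)ˣ
  hg : CondStar' A Λ g
  Vsub : Fin (r + 1) → Submodule ℂ E
  hVsub : ∀ s : Fin r, (Vsub s.castSucc : Set E) = {v : E | v = 0 ∨ dstd A v ≤ lam s}
  hVlast : Vsub (Fin.last r) = ⊥
  W : Fin r → Submodule ℂ E
  hW_sup : ∀ s : Fin r, W s ⊔ Vsub s.succ = Vsub s.castSucc
  hW_inf : ∀ s : Fin r, W s ⊓ Vsub s.succ = ⊥
  hW_lim : ∀ s : Fin r, ∀ b : Fin (Module.finrank ℂ (eigU Λ (lam s))) → E,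
    LinearIndependent ℂ b → Submodule.span ℂ (Set.range b) = W s →
    ∀ c : Fin (Module.finrank ℂ (eigU Λ (lam s))) → E,
    LinearIndependent ℂ c → Submodule.span ℂ (Set.range c) = eigU Λ (lam s) →
    ∃ (hb : (EP (Module.finrank ℂ (eigU Λ (lam s)))).wedge b ≠ 0)
      (hc : (EP (Module.finrank ℂ (eigU Λ (lam s)))).wedge c ≠ 0),
      LimSet (EP (Module.finrank ℂ (eigU Λ (lam s)))).R A g hb
        = {Projectivization.mk ℂ ((EP (Module.finrank ℂ (eigU Λ (lam s)))).wedge c) hc}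
  C : ℕ → (E →L[ℂ] E)ˣ
  hC_lim : Tendsto (fun i => (C i : E →L[ℂ] E)) atTop (𝓝 1)
  hC_map : ∀ (s : Fin r) (i : ℕ),
    Submodule.map ((((C i * (g i)⁻¹ * A i : (E →L[ℂ] E)ˣ) : E →L[ℂ] E) : E →ₗ[ℂ] E)) (W s)
      = eigU Λ (lam s)

/-- A model for the symmetric algebra `Sym(E*) = ⊕_k Sym^k(E*)` on the dual of `E`:
each graded piece is a Hermitian space carrying a compatible representation of `GL(E)`
(induced by the dual of the standard representation), `gen` identifies the degree-one piece
with `E*` equivariantly, and the product is bilinear, equivariant, has no zero divisors, and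
together with the generators spans each graded piece. -/
structure SymModel (Λ : E →L[ℂ] E) where
  P : ℕ → Type
  [normed : ∀ k, NormedAddCommGroup (P k)]
  [ips : ∀ k, InnerProductSpace ℂ (P k)]
  [fd : ∀ k, FiniteDimensional ℂ (P k)]
  R : ∀ k, Rep Λ (P k)
  mul : ∀ {k l : ℕ}, P k →ₗ[ℂ] P l →ₗ[ℂ] P (k + l)
  mul_equivariant : ∀ {k l : ℕ} (u : (E →L[ℂ] E)ˣ) (x : P k) (y : P l),
    (((R (k + l)).ρ u : (P (k + l) →L[ℂ] P (k + l))ˣ) : P (k + l) →L[ℂ] P (k + l)) (mul x y)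
      = mul ((((R k).ρ u : (P k →L[ℂ] P k)ˣ) : P k →L[ℂ] P k) x)
            ((((R l).ρ u : (P l →L[ℂ] P l)ˣ) : P l →L[ℂ] P l) y)
  mul_ne_zero : ∀ {k l : ℕ} {x : P k} {y : P l}, x ≠ 0 → y ≠ 0 → mul x y ≠ 0
  gen : (E →L[ℂ] ℂ) ≃ₗ[ℂ] P 1
  gen_equivariant : ∀ (u : (E →L[ℂ] E)ˣ) (l : E →L[ℂ] ℂ),
    (((R 1).ρ u : (P 1 →L[ℂ] P 1)ˣ) : P 1 →L[ℂ] P 1) (gen l)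
      = gen (l.comp (((u⁻¹ : (E →L[ℂ] E)ˣ) : E →L[ℂ] E)))
  span_gen_mul : ∀ k : ℕ, Submodule.span ℂ
      {z : P (k + 1) | ∃ (x : P k) (l : E →L[ℂ] ℂ), z = mul x (gen l)} = ⊤

attribute [instance] SymModel.normed SymModel.ips SymModel.fd

section LogConvexity

open Real

theorem sum_rpow_mul_rpow_le {ι : Type*} (s : Finset ι) {f g : ι → ℝ} (hf : ∀ i ∈ s, 0 ≤ f i)
    (hg : ∀ i ∈ s, 0 ≤ g i) {a b : ℝ} (ha : 0 ≤ a) (hb : 0 ≤ b) (hab : a + b = 1) :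
    ∑ i ∈ s, f i ^ a * g i ^ b ≤ (∑ i ∈ s, f i) ^ a * (∑ i ∈ s, g i) ^ b := by
  rcases ha.eq_or_lt with rfl | ha
  · simp [show b = 1 by linarith]
  rcases hb.eq_or_lt with rfl | hb
  · simp [show a = 1 by linarith]
  have hpow (c : ℝ) (hc : 0 < c) (x : ℝ) (hx : 0 ≤ x) : (x ^ c) ^ (1 / c) = x := by
    rw [← rpow_mul hx, mul_one_div_cancel hc.ne', rpow_one]
  have := inner_le_Lp_mul_Lq_of_nonneg s (holderConjugate_one_div ha hb hab)
    (fun i hi => rpow_nonneg (hf i hi) a) (fun i hi => rpow_nonneg (hg i hi) b)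
  rwa [one_div_one_div, one_div_one_div, Finset.sum_congr rfl fun i hi => hpow a ha _ (hf i hi),
    Finset.sum_congr rfl fun i hi => hpow b hb _ (hg i hi)] at this

theorem mul_exp_add_eq_rpow_mul_rpow {a : ℝ} (ha : 0 ≤ a) (c x y : ℝ) {α β : ℝ} (hαβ : α + β = 1) :
    a * rexp (c * (α * x + β * y)) = (a * rexp (c * x)) ^ α * (a * rexp (c * y)) ^ β := by
  rw [mul_rpow ha (exp_pos _).le, mul_rpow ha (exp_pos _).le, ← exp_mul, ← exp_mul,
    mul_mul_mul_comm, ← rpow_add' ha (by rw [hαβ]; exact one_ne_zero), hαβ, rpow_one, ← exp_add]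
  ring_nf

theorem convexOn_log_sum_mul_exp {ι : Type*} (s : Finset ι) {a : ι → ℝ} (ha : ∀ i ∈ s, 0 ≤ a i)
    (c : ι → ℝ) : ConvexOn ℝ Set.univ fun t => log (∑ i ∈ s, a i * rexp (c i * t)) := by
  refine ⟨convex_univ, fun x _ y _ α β hα hβ hαβ => ?_⟩
  by_cases hzero : ∀ i ∈ s, a i = 0
  · have hsum (t : ℝ) : ∑ i ∈ s, a i * rexp (c i * t) = 0 :=
      Finset.sum_eq_zero fun i hi => by rw [hzero i hi, zero_mul]
    simp [hsum]
  push Not at hzero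
  obtain ⟨j, hj, haj⟩ := hzero
  have hpos (t : ℝ) : 0 < ∑ i ∈ s, a i * rexp (c i * t) :=
    Finset.sum_pos' (fun i hi => mul_nonneg (ha i hi) (exp_pos _).le)
      ⟨j, hj, mul_pos ((ha j hj).lt_of_ne' haj) (exp_pos _)⟩
  have hholder : ∑ i ∈ s, a i * rexp (c i * (α * x + β * y)) ≤
      (∑ i ∈ s, a i * rexp (c i * x)) ^ α * (∑ i ∈ s, a i * rexp (c i * y)) ^ β := by
    rw [Finset.sum_congr rfl fun i hi => mul_exp_add_eq_rpow_mul_rpow (ha i hi) (c i) x y hαβ]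
    exact sum_rpow_mul_rpow_le s (fun i hi => mul_nonneg (ha i hi) (exp_pos _).le)
      (fun i hi => mul_nonneg (ha i hi) (exp_pos _).le) hα hβ hαβ
  calc log (∑ i ∈ s, a i * rexp (c i * (α • x + β • y)))
      ≤ log ((∑ i ∈ s, a i * rexp (c i * x)) ^ α * (∑ i ∈ s, a i * rexp (c i * y)) ^ β) :=
        log_le_log (hpos _) hholder
    _ = α • log (∑ i ∈ s, a i * rexp (c i * x)) + β • log (∑ i ∈ s, a i * rexp (c i * y)) := by
        rw [log_mul (rpow_pos_of_pos (hpos x) α).ne' (rpow_pos_of_pos (hpos y) β).ne',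
          log_rpow (hpos x), log_rpow (hpos y), smul_eq_mul, smul_eq_mul]

end LogConvexity

theorem exp_apply_of_apply_eq_smul {𝕜 F : Type*} [RCLike 𝕜] [NormedAddCommGroup F]
    [NormedSpace 𝕜 F] [CompleteSpace F] {T : F →L[𝕜] F} {c : 𝕜} {x : F} (h : T x = c • x) :
    exp T x = exp c • x := by
  have hpow (n : ℕ) : (T ^ n) x = c ^ n • x := by
    induction n with
    | zero => simp
    | succ n ih => rw [pow_succ, mul_apply_eq_comp, h, map_smul, ih, smul_smul, ← pow_succ']
  have hT := (exp_series_hasSum_exp' (𝕂 := 𝕜) T).mapL (ContinuousLinearMap.apply 𝕜 F x)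
  have hc := (exp_series_hasSum_exp' (𝕂 := 𝕜) c).smul_const x
  simp only [ContinuousLinearMap.apply_apply, smul_apply, hpow, smul_smul, smul_eq_mul] at hT hc
  exact hT.unique hc

theorem exp_smul_apply_eigenvectorBasis {T : V →L[ℂ] V} (hT : (T : V →ₗ[ℂ] V).IsSymmetric)
    {n : ℕ} (hn : Module.finrank ℂ V = n) (t : ℝ) (i : Fin n) :
    exp ((t : ℂ) • T) (hT.eigenvectorBasis hn i) =
      Complex.exp (t * hT.eigenvalues hn i) • hT.eigenvectorBasis hn i := by
  rw [Complex.exp_eq_exp_ℂ]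
  refine exp_apply_of_apply_eq_smul ?_
  rw [smul_apply, ← ContinuousLinearMap.coe_coe, hT.apply_eigenvectorBasis, smul_smul]
  rfl

theorem norm_exp_smul_apply_sq {T : V →L[ℂ] V} (hT : (T : V →ₗ[ℂ] V).IsSymmetric)
    {n : ℕ} (hn : Module.finrank ℂ V = n) (t : ℝ) (v : V) :
    ‖exp ((t : ℂ) • T) v‖ ^ 2 =
      ∑ i, ‖(hT.eigenvectorBasis hn).repr v i‖ ^ 2 * Real.exp (2 * hT.eigenvalues hn i * t) := by
  have hrepr : exp ((t : ℂ) • T) v = (hT.eigenvectorBasis hn).repr.symm (WithLp.toLp 2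
      fun i => Complex.exp (t * hT.eigenvalues hn i) * (hT.eigenvectorBasis hn).repr v i) := by
    conv_lhs => rw [← (hT.eigenvectorBasis hn).sum_repr v]
    rw [map_sum, ← OrthonormalBasis.sum_repr_symm]
    refine Finset.sum_congr rfl fun i _ => ?_
    rw [map_smul, exp_smul_apply_eigenvectorBasis, smul_smul, mul_comm]
  rw [hrepr, LinearIsometryEquiv.norm_map, EuclideanSpace.norm_sq_eq]
  refine Finset.sum_congr rfl fun i _ => ?_
  rw [norm_mul, mul_pow, Complex.norm_exp, ← Complex.ofReal_mul, Complex.ofReal_re, sq (Real.exp _),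
    ← Real.exp_add, mul_comm]
  ring_nf

theorem logNormExp_convexOn_general (Λ : V →L[ℂ] V) (hΛ : IsSelfAdjoint Λ) (v : V) :
    ConvexOn ℝ Set.univ (fun t : ℝ => Real.log ‖exp ((t : ℂ) • Λ) v‖) := by
  have hlog (x : V) : Real.log ‖x‖ = (2⁻¹ : ℝ) • Real.log (‖x‖ ^ 2) := by
    rw [Real.log_pow, smul_eq_mul]
    push_cast
    ring
  simp_rw [hlog, norm_exp_smul_apply_sq hΛ.isSymmetric rfl]
  exact (convexOn_log_sum_mul_exp _ (fun i _ => sq_nonneg _) _).smul (by norm_num)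

/-- For a self-adjoint endomorphism `Λ` of a finite-dimensional complex inner
product space and any nonzero vector `v`, the function `t ↦ log ‖e^{tΛ} v‖` is convex on `ℝ`. -/
theorem logNormExp_convexOn (Λ : V →L[ℂ] V) (hΛ : IsSelfAdjoint Λ) (v : V) (hv : v ≠ 0) :
    ConvexOn ℝ Set.univ (fun t : ℝ => Real.log ‖exp ((t : ℂ) • Λ) v‖) :=
  logNormExp_convexOn_general Λ hΛ v

end CSW
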